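/- If λ majorizes μ (vectors in ℝ^n with equal sum), then there exist nonnegative reals p_1,…,p_m summing to 1 and permutation matrices P_1,…,P_m such that μ = Σ_k p_k P_k λ (Hardy–Littlewood–Pólya / Birkhoff). -/

import Mathlib

/-!
The convex hull of the finitely many rearrangements of `λ` is closed, so by Hahn–Banach it
suffices that every linear functional `x ↦ ∑ cᵢ xᵢ` is at least as large at some rearrangement
of `λ` as at `μ`. Writing `c↓` for the decreasing rearrangement, the rearrangement inequality
gives `∑ cᵢ μᵢ ≤ ∑ c↓ᵢ μ↓ᵢ`; Abel summation against the decreasing weights `c↓` turns the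
partial-sum inequalities of majorization into `∑ c↓ᵢ μ↓ᵢ ≤ ∑ c↓ᵢ λ↓ᵢ`, and the right-hand side
is `∑ cᵢ λ_{σ i}` for a suitable permutation `σ`.
-/

open Matrix Finset in
/-- `u` rearranged in decreasing order. -/
noncomputable def sortDesc {n : ℕ} (u : Fin n → ℝ) : Fin n → ℝ :=
  fun i => u (Tuple.sort u i.rev)

open Finset in
/-- `u` majorizes `v`: every partial sum of the decreasing rearrangement of `u`
dominates that of `v`, and the total sums agree. -/
noncomputable def Majorizes {n : ℕ} (u v : Fin n → ℝ) : Prop :=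
  (∀ k : ℕ, ∑ i ∈ Finset.univ.filter (fun i : Fin n => (i : ℕ) < k), sortDesc v i ≤
      ∑ i ∈ Finset.univ.filter (fun i : Fin n => (i : ℕ) < k), sortDesc u i) ∧
  ∑ i, u i = ∑ i, v i

open Finset

section Abel

variable {R : Type*} [CommRing R] [PartialOrder R] [IsOrderedRing R]

theorem sum_range_mul_nonneg_of_antitoneOn {f d : ℕ → R} {n : ℕ}
    (hf : AntitoneOn f (Set.Iio n)) (hd : ∀ k, 0 ≤ ∑ i ∈ range k, d i)
    (hn : ∑ i ∈ range n, d i = 0) :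
    0 ≤ ∑ i ∈ range n, f i * d i := by
  have hparts := sum_range_by_parts f d n
  simp only [smul_eq_mul] at hparts
  rw [hparts, hn, mul_zero, zero_sub, neg_nonneg]
  refine sum_nonpos fun i hi => mul_nonpos_of_nonpos_of_nonneg ?_ (hd (i + 1))
  have hi : i + 1 < n := by rw [mem_range] at hi; omega
  exact sub_nonpos.2 (hf (show i < n by omega) hi (Nat.le_succ i))

theorem sum_filter_val_lt_eq_sum_range {M : Type*} [AddCommMonoid M] {n : ℕ} (u : Fin n → M)
    (k : ℕ) :
    ∑ i ∈ univ.filter (fun i : Fin n => (i : ℕ) < k), u i =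
      ∑ j ∈ range k, if h : j < n then u ⟨j, h⟩ else 0 := by
  induction k with
  | zero => simp
  | succ k ih =>
    rw [sum_range_succ, ← ih]
    split_ifs with hk
    · have hinsert : univ.filter (fun i : Fin n => (i : ℕ) < k + 1) =
          insert ⟨k, hk⟩ (univ.filter (fun i : Fin n => (i : ℕ) < k)) := by
        ext i
        simp only [Order.lt_add_one_iff, mem_filter, mem_univ, true_and, mem_insert, Fin.ext_iff]
        omega
      rw [hinsert, sum_insert (by simp), add_comm]
    · rw [add_zero]
      congr 1
      ext i
      simp only [Order.lt_add_one_iff, mem_filter, mem_univ, true_and]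
      omega

theorem sum_mul_le_sum_mul_of_partialSums_le {n : ℕ} {f a b : Fin n → R} (hf : Antitone f)
    (hab : ∀ k : ℕ, ∑ i ∈ univ.filter (fun i : Fin n => (i : ℕ) < k), b i ≤
      ∑ i ∈ univ.filter (fun i : Fin n => (i : ℕ) < k), a i)
    (htot : ∑ i, a i = ∑ i, b i) :
    ∑ i, f i * b i ≤ ∑ i, f i * a i := by
  set F : ℕ → R := fun j => if h : j < n then f ⟨j, h⟩ else 0
  set D : ℕ → R := fun j => if h : j < n then a ⟨j, h⟩ - b ⟨j, h⟩ else 0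
  have hD : ∀ k, ∑ j ∈ range k, D j =
      ∑ i ∈ univ.filter (fun i : Fin n => (i : ℕ) < k), (a i - b i) :=
    fun k => (sum_filter_val_lt_eq_sum_range (fun i => a i - b i) k).symm
  have hF : AntitoneOn F (Set.Iio n) := fun i hi j hj hij => by
    simp only [F, dif_pos (show i < n from hi), dif_pos (show j < n from hj)]
    exact hf (Fin.mk_le_mk.2 hij)
  have hDn : ∑ j ∈ range n, D j = 0 := by
    rw [hD, filter_true_of_mem fun i _ => i.isLt, sum_sub_distrib, htot, sub_self]
  have hDk : ∀ k, 0 ≤ ∑ j ∈ range k, D j := fun k => by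
    rw [hD, sum_sub_distrib, sub_nonneg]; exact hab k
  have key := sum_range_mul_nonneg_of_antitoneOn hF hDk hDn
  rw [← Fin.sum_univ_eq_sum_range (fun j => F j * D j)] at key
  simpa [F, D, mul_sub] using key

end Abel

theorem sortDesc_eq_comp {n : ℕ} (u : Fin n → ℝ) :
    sortDesc u = u ∘ (Fin.revPerm.trans (Tuple.sort u)) :=
  rfl

theorem antitone_sortDesc {n : ℕ} (u : Fin n → ℝ) : Antitone (sortDesc u) :=
  fun _ _ hij => Tuple.monotone_sort u (Fin.rev_le_rev.2 hij)

theorem sum_sortDesc {n : ℕ} (u : Fin n → ℝ) : ∑ i, sortDesc u i = ∑ i, u i :=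
  Equiv.sum_comp (Fin.revPerm.trans (Tuple.sort u)) u

theorem sum_mul_le_sum_sortDesc_mul_sortDesc {n : ℕ} (c x : Fin n → ℝ) :
    ∑ i, c i * x i ≤ ∑ i, sortDesc c i * sortDesc x i := by
  set ec := Fin.revPerm.trans (Tuple.sort c)
  set ex := Fin.revPerm.trans (Tuple.sort x)
  calc ∑ i, c i * x i = ∑ i, sortDesc c i * sortDesc x ((ec.trans ex.symm) i) := by
        rw [← Equiv.sum_comp ec]; simp [sortDesc_eq_comp, ec, ex]
    _ ≤ ∑ i, sortDesc c i * sortDesc x i :=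
        ((antitone_sortDesc c).monovary (antitone_sortDesc x)).sum_mul_comp_perm_le_sum_mul

theorem exists_perm_sum_sortDesc_mul_sortDesc_eq {n : ℕ} (c x : Fin n → ℝ) :
    ∃ σ : Equiv.Perm (Fin n), ∑ i, sortDesc c i * sortDesc x i = ∑ i, c i * x (σ i) := by
  set ec := Fin.revPerm.trans (Tuple.sort c)
  refine ⟨ec.symm.trans (Fin.revPerm.trans (Tuple.sort x)), ?_⟩
  rw [← Equiv.sum_comp ec.symm]
  simp [sortDesc_eq_comp, ec]

theorem exists_perm_sum_mul_le_of_majorizes {n : ℕ} {lam mu : Fin n → ℝ}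
    (hmaj : Majorizes lam mu) (c : Fin n → ℝ) :
    ∃ σ : Equiv.Perm (Fin n), ∑ i, c i * mu i ≤ ∑ i, c i * lam (σ i) := by
  obtain ⟨σ, hσ⟩ := exists_perm_sum_sortDesc_mul_sortDesc_eq c lam
  refine ⟨σ, ?_⟩
  calc ∑ i, c i * mu i ≤ ∑ i, sortDesc c i * sortDesc mu i :=
        sum_mul_le_sum_sortDesc_mul_sortDesc c mu
    _ ≤ ∑ i, sortDesc c i * sortDesc lam i :=
        sum_mul_le_sum_mul_of_partialSums_le (antitone_sortDesc c) hmaj.1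
          (by rw [sum_sortDesc, sum_sortDesc, hmaj.2])
    _ = ∑ i, c i * lam (σ i) := hσ

theorem mem_convexHull_of_forall_exists_le {E : Type*} [AddCommGroup E] [Module ℝ E]
    [TopologicalSpace E] [T2Space E] [IsTopologicalAddGroup E] [ContinuousSMul ℝ E]
    [LocallyConvexSpace ℝ E] {s : Set E} (hs : s.Finite) {x : E}
    (h : ∀ f : StrongDual ℝ E, ∃ y ∈ s, f x ≤ f y) : x ∈ convexHull ℝ s := by
  by_contra hx
  obtain ⟨f, u, hfs, hfx⟩ := geometric_hahn_banach_closed_point (convex_convexHull ℝ s)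
    (hs.isCompact_convexHull ℝ).isClosed hx
  obtain ⟨y, hy, hxy⟩ := h f
  linarith [hfs y (subset_convexHull ℝ s hy)]

theorem exists_fin_of_mem_convexHull_range {R E ι : Type*} [Field R] [LinearOrder R]
    [IsStrictOrderedRing R] [AddCommGroup E] [Module R E] {v : ι → E} {x : E}
    (hx : x ∈ convexHull R (Set.range v)) :
    ∃ (m : ℕ) (w : Fin m → R) (g : Fin m → ι),
      (∀ k, 0 ≤ w k) ∧ ∑ k, w k = 1 ∧ ∑ k, w k • v (g k) = x := by
  obtain ⟨κ, _, w, z, hw₀, hw₁, hz, hwz⟩ := mem_convexHull_iff_exists_fintype.1 hx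
  choose g hg using hz
  set e := Fintype.equivFin κ
  refine ⟨Fintype.card κ, w ∘ e.symm, g ∘ e.symm, fun k => hw₀ _, ?_, ?_⟩
  · rw [← hw₁]; exact Equiv.sum_comp e.symm w
  · rw [← hwz, ← Equiv.sum_comp e.symm]; simp [hg]

/-- Hardy–Littlewood–Pólya / Birkhoff: if `λ` majorizes `μ`, then `μ` is a convex
combination of permutations of `λ`. -/
theorem exists_convex_combination_of_permutations_of_majorizes {n : ℕ}
    (lam mu : Fin n → ℝ) (hmaj : Majorizes lam mu) :
    ∃ (m : ℕ) (p : Fin m → ℝ) (P : Fin m → Equiv.Perm (Fin n)),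
      (∀ k, 0 ≤ p k) ∧ (∑ k, p k = 1) ∧ ∀ i, mu i = ∑ k, p k * lam (P k i) := by
  have hmu : mu ∈ convexHull ℝ (Set.range fun σ : Equiv.Perm (Fin n) => lam ∘ σ) := by
    refine mem_convexHull_of_forall_exists_le (Set.finite_range _) fun f => ?_
    set c : Fin n → ℝ := fun i => f fun j => if i = j then 1 else 0
    have hf (x : Fin n → ℝ) : f x = ∑ i, c i * x i := by
      simpa [mul_comm] using f.toLinearMap.pi_apply_eq_sum_univ x
    obtain ⟨σ, hσ⟩ := exists_perm_sum_mul_le_of_majorizes hmaj c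
    exact ⟨lam ∘ σ, ⟨σ, rfl⟩, by simpa only [hf, Function.comp_apply] using hσ⟩
  obtain ⟨m, p, P, hp₀, hp₁, hpP⟩ := exists_fin_of_mem_convexHull_range hmu
  refine ⟨m, p, P, hp₀, hp₁, fun i => ?_⟩
  simp [← hpP]
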